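/- Theorem 1(b): For each T ∈ ℕ, let n(T) ≥ 1 be an integer with n(T) → ∞ or n(T) ≥ K for all large T, let K₀ ≥ 1 be fixed, let {G₁^{(T)},…,G_{K₀}^{(T)}} be a partition of {1,…,n(T)} into K₀ nonempty groups, and let d̂^{(T)} be a random symmetric real array on {1,…,n(T)}² with probability measure P_T. Assume that P_T( {G₁^{(T)},…,G_{K₀}^{(T)}} is d̂^{(T)}-separated ) → 1 as T → ∞. Then for every fixed integer K > K₀ (with n(T) ≥ K for all sufficiently large T), P_T( the complete-linkage HAC partition P^{n(T)−K}(d̂^{(T)}) into K clusters is a refinement of {G₁^{(T)},…,G_{K₀}^{(T)}} ) → 1 as T → ∞. -/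

import Mathlib

/-!
Along any run of the algorithm the `n - r` clusters after `r` merges are nonempty and
pairwise disjoint. While more than `K₀` clusters remain, two of them lie in a common group
(pigeonhole); on a separated instance every linkage within a group is below every linkage
across groups, so the minimizing merge never joins two groups. Hence the first `n - K`
merges respect the groups whenever `d̂` is separated, and the event of the conclusion
contains the event of separation.
-/

open Finset

/-- Complete-linkage dissimilarity `Δ(S,S') = max_{i ∈ S, j ∈ S'} d i j`, as an
extended real (so that the value over an empty index set is `⊥`). -/
noncomputable def cLink {n : ℕ} (d : Fin n → Fin n → ℝ) (S S' : Finset (Fin n)) : EReal :=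
  sSup {x : EReal | ∃ i ∈ S, ∃ j ∈ S', x = (d i j : EReal)}

/-- Within-cluster dissimilarity `Δ(C) = max_{i,j ∈ C, i ≠ j} d i j`, as an extended real;
for a singleton (or empty) cluster the value is `⊥`, which is smaller than every real. -/
noncomputable def cDiam {n : ℕ} (d : Fin n → Fin n → ℝ) (C : Finset (Fin n)) : EReal :=
  sSup {x : EReal | ∃ i ∈ C, ∃ j ∈ C, i ≠ j ∧ x = (d i j : EReal)}

/-- The initial partition of `{1,…,n}` into `n` singleton clusters. -/
def singletonPartition (n : ℕ) : Finset (Finset (Fin n)) :=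
  Finset.univ.image fun i : Fin n => ({i} : Finset (Fin n))

/-- `Q` is obtained from `P` by merging one pair of distinct clusters attaining the
minimum of the complete-linkage dissimilarity `Δ` over all pairs of distinct clusters. -/
def IsMergeStep {n : ℕ} (d : Fin n → Fin n → ℝ) (P Q : Finset (Finset (Fin n))) : Prop :=
  ∃ C ∈ P, ∃ C' ∈ P, C ≠ C' ∧
    (∀ D ∈ P, ∀ D' ∈ P, D ≠ D' → cLink d C C' ≤ cLink d D D') ∧
    Q = insert (C ∪ C') ((P.erase C).erase C')

/-- A run of the complete-linkage HAC algorithm (with an arbitrary choice of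
tie-breaking at each step): `P 0` is the singleton partition and for every
`r < n - 1`, `P (r+1)` is obtained from `P r` by a merge step. -/
def IsHACChain {n : ℕ} (d : Fin n → Fin n → ℝ) (P : ℕ → Finset (Finset (Fin n))) : Prop :=
  P 0 = singletonPartition n ∧ ∀ r, r < n - 1 → IsMergeStep d (P r) (P (r + 1))

/-- `G` is a partition of `{1,…,n}` into `K₀` nonempty groups. -/
def IsGroupPartition {n K₀ : ℕ} (G : Fin K₀ → Finset (Fin n)) : Prop :=
  (∀ k, (G k).Nonempty) ∧ (∀ i : Fin n, ∃ k, i ∈ G k) ∧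
    ∀ k k' : Fin K₀, k ≠ k' → Disjoint (G k) (G k')

/-- The partition `G` is `d`-separated: every within-group distance is strictly smaller
than every between-group distance (vacuously true when `K₀ = 1`). -/
def IsSeparated {n K₀ : ℕ} (d : Fin n → Fin n → ℝ) (G : Fin K₀ → Finset (Fin n)) : Prop :=
  ∀ k : Fin K₀, ∀ i ∈ G k, ∀ j ∈ G k, i ≠ j →
    ∀ k₁ k₂ : Fin K₀, k₁ ≠ k₂ → ∀ a ∈ G k₁, ∀ b ∈ G k₂, d i j < d a b

/-- `A` is a refinement of `B`: every element of `A` is a subset of some element of `B`. -/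
def IsRefinement {n : ℕ} (A B : Finset (Finset (Fin n))) : Prop :=
  ∀ C ∈ A, ∃ D ∈ B, C ⊆ D

open MeasureTheory Filter

variable {n : ℕ}

theorem cLink_eq_sup (d : Fin n → Fin n → ℝ) (S S' : Finset (Fin n)) :
    cLink d S S' = (S ×ˢ S').sup fun p => (d p.1 p.2 : EReal) := by
  rw [Finset.sup_eq_sSup_image, cLink]
  congr 1
  ext x
  simp only [Set.mem_ofPred_eq, Set.mem_image, Finset.coe_product, Set.mem_prod,
    Finset.mem_coe, Prod.exists]
  constructor
  · rintro ⟨i, hi, j, hj, rfl⟩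
    exact ⟨i, j, ⟨hi, hj⟩, rfl⟩
  · rintro ⟨i, j, ⟨hi, hj⟩, rfl⟩
    exact ⟨i, hi, j, hj, rfl⟩

theorem le_cLink (d : Fin n → Fin n → ℝ) {S S' : Finset (Fin n)} {i j : Fin n}
    (hi : i ∈ S) (hj : j ∈ S') : (d i j : EReal) ≤ cLink d S S' := by
  rw [cLink_eq_sup]
  exact Finset.le_sup (f := fun p => (d p.1 p.2 : EReal)) (b := (i, j))
    (Finset.mem_product.2 ⟨hi, hj⟩)

theorem cLink_lt_cLink_of_isSeparated {K₀ : ℕ} {d : Fin n → Fin n → ℝ}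
    {G : Fin K₀ → Finset (Fin n)} (hsep : IsSeparated d G) {k k₁ k₂ : Fin K₀}
    {C₁ C₂ C C' : Finset (Fin n)} (hC₁ : C₁ ⊆ G k) (hC₂ : C₂ ⊆ G k)
    (hdisj : Disjoint C₁ C₂) (hC : C ⊆ G k₁) (hC' : C' ⊆ G k₂) (hk : k₁ ≠ k₂)
    (hCne : C.Nonempty) (hC'ne : C'.Nonempty) : cLink d C₁ C₂ < cLink d C C' := by
  obtain ⟨a, ha⟩ := hCne
  obtain ⟨b, hb⟩ := hC'ne
  refine lt_of_lt_of_le ?_ (le_cLink d ha hb)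
  rw [cLink_eq_sup, Finset.sup_lt_iff (EReal.bot_lt_coe _)]
  rintro ⟨i, j⟩ hij
  obtain ⟨hi, hj⟩ := Finset.mem_product.1 hij
  have hij : i ≠ j := fun h => Finset.disjoint_left.1 hdisj hi (h ▸ hj)
  exact EReal.coe_lt_coe_iff.2
    (hsep k i (hC₁ hi) j (hC₂ hj) hij k₁ k₂ hk a (hC ha) b (hC' hb))

def IsClustering (P : Finset (Finset (Fin n))) : Prop :=
  (∀ C ∈ P, C.Nonempty) ∧ (P : Set (Finset (Fin n))).PairwiseDisjoint id

theorem isClustering_singletonPartition : IsClustering (singletonPartition n) := by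
  simp only [IsClustering, singletonPartition, Finset.mem_image, Finset.mem_univ, true_and,
    forall_exists_index, forall_apply_eq_imp_iff, Finset.singleton_nonempty, implies_true,
    Finset.coe_image, Finset.coe_univ, Set.image_univ]
  rintro _ ⟨i, rfl⟩ _ ⟨j, rfl⟩ hij
  exact Finset.disjoint_singleton.2 fun h => hij (h ▸ rfl)

theorem card_singletonPartition : (singletonPartition n).card = n := by
  rw [singletonPartition, Finset.card_image_of_injective _ Finset.singleton_injective,
    Finset.card_univ, Fintype.card_fin]

section Merge

variable {P : Finset (Finset (Fin n))} {C C' : Finset (Fin n)}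

theorem IsClustering.merge (hP : IsClustering P) (hC : C ∈ P) (hC' : C' ∈ P) :
    IsClustering (insert (C ∪ C') ((P.erase C).erase C')) := by
  obtain ⟨hne, hdisj⟩ := hP
  refine ⟨?_, ?_⟩
  · intro D hD
    rcases Finset.mem_insert.1 hD with rfl | hD
    · exact (hne C hC).mono Finset.subset_union_left
    · exact hne D (Finset.mem_of_mem_erase (Finset.mem_of_mem_erase hD))
  · rw [Finset.coe_insert]
    refine (hdisj.subset ?_).insert ?_
    · intro D hD
      exact Finset.mem_of_mem_erase (Finset.mem_of_mem_erase hD)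
    · intro D hD _
      obtain ⟨hDC', hD⟩ := Finset.mem_erase.1 hD
      obtain ⟨hDC, hD⟩ := Finset.mem_erase.1 hD
      exact Finset.disjoint_union_left.2
        ⟨hdisj hC hD (Ne.symm hDC), hdisj hC' hD (Ne.symm hDC')⟩

theorem IsClustering.card_merge (hP : IsClustering P) (hC : C ∈ P) (hC' : C' ∈ P)
    (hCC' : C ≠ C') : (insert (C ∪ C') ((P.erase C).erase C')).card + 1 = P.card := by
  have hC'mem : C' ∈ P.erase C := Finset.mem_erase.2 ⟨Ne.symm hCC', hC'⟩
  -- an old cluster equal to `C ∪ C'` would be distinct from `C` and meet it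
  have hnew : C ∪ C' ∉ (P.erase C).erase C' := by
    intro hmem
    obtain ⟨hne, hD⟩ := Finset.mem_erase.1 (Finset.mem_of_mem_erase hmem)
    obtain ⟨a, ha⟩ := hP.1 C hC
    exact Finset.disjoint_left.1 (hP.2 hD hC hne) (Finset.mem_union_left _ ha) ha
  rw [Finset.card_insert_of_notMem hnew, Finset.card_erase_of_mem hC'mem,
    Finset.card_erase_of_mem hC]
  have hpos : 0 < P.card - 1 := Finset.card_erase_of_mem hC ▸ Finset.card_pos.2 ⟨C', hC'mem⟩
  omega

end Merge

theorem IsMergeStep.isClustering_and_card {d : Fin n → Fin n → ℝ}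
    {P Q : Finset (Finset (Fin n))} (h : IsMergeStep d P Q) (hP : IsClustering P) :
    IsClustering Q ∧ Q.card + 1 = P.card := by
  obtain ⟨C, hC, C', hC', hCC', -, rfl⟩ := h
  exact ⟨hP.merge hC hC', hP.card_merge hC hC' hCC'⟩

theorem IsMergeStep.subset_group {K₀ : ℕ} {d : Fin n → Fin n → ℝ}
    {G : Fin K₀ → Finset (Fin n)} (hsep : IsSeparated d G) {P Q : Finset (Finset (Fin n))}
    (h : IsMergeStep d P Q) (hP : IsClustering P) (hPG : ∀ C ∈ P, ∃ k, C ⊆ G k)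
    (hcard : K₀ < P.card) : ∀ D ∈ Q, ∃ k, D ⊆ G k := by
  obtain ⟨C, hC, C', hC', -, hmin, rfl⟩ := h
  choose g hg using hPG
  obtain ⟨⟨C₁, hC₁⟩, ⟨C₂, hC₂⟩, h12, hg12⟩ :=
    Fintype.exists_ne_map_eq_of_card_lt (fun D : P => g D.1 D.2)
      (by simpa only [Fintype.card_fin, Fintype.card_coe] using hcard)
  have h12 : C₁ ≠ C₂ := fun h => h12 (Subtype.ext h)
  have hsame : g C hC = g C' hC' := by
    by_contra hne
    refine (hmin C₁ hC₁ C₂ hC₂ h12).not_gt ?_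
    exact cLink_lt_cLink_of_isSeparated hsep (hg C₁ hC₁) (hg12 ▸ hg C₂ hC₂)
      (hP.2 hC₁ hC₂ h12) (hg C hC) (hg C' hC') hne (hP.1 C hC) (hP.1 C' hC')
  intro D hD
  rcases Finset.mem_insert.1 hD with rfl | hD
  · exact ⟨g C hC, Finset.union_subset (hg C hC) (hsame ▸ hg C' hC')⟩
  · exact ⟨_, hg D (Finset.mem_of_mem_erase (Finset.mem_of_mem_erase hD))⟩

namespace IsHACChain

variable {d : Fin n → Fin n → ℝ} {Q : ℕ → Finset (Finset (Fin n))}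

theorem isClustering_and_card (hQ : IsHACChain d Q) :
    ∀ r ≤ n - 1, IsClustering (Q r) ∧ (Q r).card = n - r := by
  intro r
  induction r with
  | zero =>
    intro _
    rw [hQ.1]
    exact ⟨isClustering_singletonPartition, card_singletonPartition⟩
  | succ r ih =>
    intro hr
    obtain ⟨hP, hcard⟩ := ih (by omega)
    obtain ⟨hQr, hcard'⟩ := (hQ.2 r (by omega)).isClustering_and_card hP
    exact ⟨hQr, by omega⟩

theorem subset_group_of_isSeparated {K₀ K : ℕ} {G : Fin K₀ → Finset (Fin n)}
    (hQ : IsHACChain d Q) (hG : ∀ i, ∃ k, i ∈ G k) (hsep : IsSeparated d G)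
    (hK : K₀ < K) : ∀ r ≤ n - K, ∀ C ∈ Q r, ∃ k, C ⊆ G k := by
  intro r
  induction r with
  | zero =>
    intro _ C hC
    rw [hQ.1, singletonPartition] at hC
    obtain ⟨i, -, rfl⟩ := Finset.mem_image.1 hC
    obtain ⟨k, hk⟩ := hG i
    exact ⟨k, Finset.singleton_subset_iff.2 hk⟩
  | succ r ih =>
    intro hr
    obtain ⟨hP, hcard⟩ := hQ.isClustering_and_card r (by omega)
    exact (hQ.2 r (by omega)).subset_group hsep hP (ih (by omega)) (by omega)

theorem isRefinement_of_isSeparated {K₀ K : ℕ} {G : Fin K₀ → Finset (Fin n)}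
    (hQ : IsHACChain d Q) (hG : ∀ i, ∃ k, i ∈ G k) (hsep : IsSeparated d G)
    (hK : K₀ < K) : IsRefinement (Q (n - K)) (Finset.univ.image G) := by
  intro C hC
  obtain ⟨k, hk⟩ := hQ.subset_group_of_isSeparated hG hsep hK (n - K) le_rfl C hC
  exact ⟨G k, Finset.mem_image_of_mem G (Finset.mem_univ k), hk⟩

end IsHACChain

theorem theorem1b_general {K₀ : ℕ}
    (n : ℕ → ℕ)
    (Ω : ℕ → Type*) [∀ T, MeasurableSpace (Ω T)]
    (μ : ∀ T, Measure (Ω T)) [∀ T, IsProbabilityMeasure (μ T)]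
    (dh : ∀ T, Ω T → Fin (n T) → Fin (n T) → ℝ)
    (G : ∀ T, Fin K₀ → Finset (Fin (n T)))
    (hG : ∀ T, IsGroupPartition (G T))
    (hsep : Tendsto (fun T => μ T {ω | IsSeparated (dh T ω) (G T)})
      atTop (nhds (1 : ENNReal)))
    (K : ℕ) (hK : K₀ < K) :
    Tendsto
      (fun T => μ T {ω | ∀ Q, IsHACChain (dh T ω) Q →
        IsRefinement (Q (n T - K)) (Finset.univ.image (G T))})
      atTop (nhds (1 : ENNReal)) := by
  refine tendsto_of_tendsto_of_tendsto_of_le_of_le' hsep tendsto_const_nhds ?_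
    (Eventually.of_forall fun T => prob_le_one)
  exact Eventually.of_forall fun T => measure_mono fun ω hω Q hQ =>
    hQ.isRefinement_of_isSeparated (hG T).2.1 hω hK

/-- **Theorem 1(b).** If, with probability tending to one, the group partition is
`d̂⁽ᵀ⁾`-separated, then for every fixed `K > K₀` (with `K ≤ n T` for all large `T`), with
probability tending to one every run of the complete-linkage HAC algorithm yields a
partition into `K` clusters that is a refinement of the group partition. -/
theorem theorem1b {K₀ : ℕ} (hK₀ : 1 ≤ K₀)
    (n : ℕ → ℕ) (hn : ∀ T, 1 ≤ n T)
    (Ω : ℕ → Type*) [∀ T, MeasurableSpace (Ω T)]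
    (μ : ∀ T, Measure (Ω T)) [∀ T, IsProbabilityMeasure (μ T)]
    (dh : ∀ T, Ω T → Fin (n T) → Fin (n T) → ℝ)
    (hsym : ∀ T ω i j, dh T ω i j = dh T ω j i)
    (G : ∀ T, Fin K₀ → Finset (Fin (n T)))
    (hG : ∀ T, IsGroupPartition (G T))
    (hsep : Tendsto (fun T => μ T {ω | IsSeparated (dh T ω) (G T)})
      atTop (nhds (1 : ENNReal)))
    (K : ℕ) (hK : K₀ < K) (hKn : ∀ᶠ T in atTop, K ≤ n T) :
    Tendsto
      (fun T => μ T {ω | ∀ Q, IsHACChain (dh T ω) Q →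
        IsRefinement (Q (n T - K)) (Finset.univ.image (G T))})
      atTop (nhds (1 : ENNReal)) :=
  theorem1b_general n Ω μ dh G hG hsep K hK
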